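/- arXiv:2305.09448 — 5 statements merged into one kernel-verified Lean document; each statement's English description precedes it below -/
import Mathlib

section
/- In a *-ring, if there exist elements P and Q with P A* A = A and A A* Q = A, then A has a Moore-Penrose inverse, explicitly given by B = A* Q P*. -/
theorem stmt1 {R : Type*} [Ring R] [StarRing R] (a p q : R)
    (hp : p * star a * a = a) (hq : a * star a * q = a) :
    (a) * (star a * q * star p) * (a) = (a) ∧
    (star a * q * star p) * (a) * (star a * q * star p) = (star a * q * star p) ∧
    star ((a) * (star a * q * star p)) = (a) * (star a * q * star p) ∧
    star ((star a * q * star p) * (a)) = (star a * q * star p) * (a) := by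
  have hp' : star a * a * star p = star a := by
    have := congrArg star hp
    simpa [star_mul, mul_assoc] using this
  have hq' : star q * a * star a = star a := by
    have := congrArg star hq
    simpa [star_mul, mul_assoc] using this
  -- h1 : a * star p = p * star a
  have h1 : a * star p = p * star a := by
    calc a * star p = (p * star a * a) * star p := by rw [hp]
    _ = p * (star a * a * star p) := by simp only [mul_assoc]
    _ = p * star a := by rw [hp']
  -- h2 : star q * a = star a * q
  have h2 : star q * a = star a * q := by
    calc star q * a = star q * (a * star a * q) := by rw [hq]
    _ = (star q * a * star a) * q := by simp only [mul_assoc]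
    _ = star a * q := by rw [hq']
  -- h3 : a * star p * a = a
  have h3 : a * star p * a = a := by
    rw [h1, hp]
  have hba : (star a * q * star p) * a = star q * a := by
    calc (star a * q * star p) * a = star q * (a * star p * a) := by rw [← h2]; simp only [mul_assoc]
    _ = star q * a := by rw [h3]
  have hab : a * (star a * q * star p) = a * star p := by
    calc a * (star a * q * star p) = (a * star a * q) * star p := by simp only [mul_assoc]
    _ = a * star p := by rw [hq]
  refine ⟨?_, ?_, ?_, ?_⟩
  · rw [hab, h3]
  · rw [hba]
    calc star q * a * (star a * q * star p) = (star q * a * star a) * (q * star p) := by simp only [mul_assoc]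
    _ = star a * q * star p := by rw [hq']; simp only [mul_assoc]
  · rw [hab, h1]
    simp [star_mul]
    rw [← h1]
  · rw [hba]
    rw [star_mul, star_star, h2, ← h2]
end

section
/- In a *-ring, if P A* A = A and A A* Q = A, then Q* A P* is a Moore-Penrose inverse of A. -/
theorem stmt2 {R : Type*} [Ring R] [StarRing R] (a p q : R)
    (hp : p * star a * a = a) (hq : a * star a * q = a) :
    (a) * (star q * a * star p) * (a) = (a) ∧ (star q * a * star p) * (a) * (star q * a * star p) = (star q * a * star p) ∧ star ((a) * (star q * a * star p)) = (a) * (star q * a * star p) ∧ star ((star q * a * star p) * (a)) = (star q * a * star p) * (a) := by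
  have hp' : star a * (a * star p) = star a := by
    simpa [star_mul, mul_assoc] using congrArg star hp
  have hq' : star q * (a * star a) = star a := by
    simpa [star_mul, mul_assoc] using congrArg star hq
  have hap : a * star p * a = a := by
    calc a * star p * a = (p * star a * a) * star p * a := by rw [hp]
      _ = p * (star a * (a * star p)) * a := by noncomm_ring
      _ = p * star a * a := by rw [hp']
      _ = a := hp
  have haq : a * star q * a = a := by
    calc a * star q * a = a * star q * (a * star a * q) := by rw [hq]
      _ = a * (star q * (a * star a)) * q := by noncomm_ring
      _ = a * star a * q := by rw [hq']
      _ = a := hq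
  have hpsym : a * star p = p * star a := by
    calc a * star p = (p * star a * a) * star p := by rw [hp]
      _ = p * (star a * (a * star p)) := by noncomm_ring
      _ = p * star a := by rw [hp']
  have hqsym : star q * a = star a * q := by
    calc star q * a = star q * (a * star a * q) := by rw [hq]
      _ = star q * (a * star a) * q := by noncomm_ring
      _ = star a * q := by rw [hq']
  have hab : a * (star q * a * star p) = a * star p := by
    calc a * (star q * a * star p) = (a * star q * a) * star p := by noncomm_ring
      _ = a * star p := by rw [haq]
  have hba : (star q * a * star p) * a = star q * a := by
    calc (star q * a * star p) * a = star q * (a * star p * a) := by noncomm_ring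
      _ = star q * a := by rw [hap]
  refine ⟨?_, ?_, ?_, ?_⟩
  · calc a * (star q * a * star p) * a = a * star q * (a * star p * a) := by noncomm_ring
      _ = a * star q * a := by rw [hap]
      _ = a := haq
  · calc (star q * a * star p) * a * (star q * a * star p)
        = star q * (a * star p * a) * (star q * a * star p) := by noncomm_ring
      _ = star q * a * (star q * a * star p) := by rw [hap]
      _ = star q * (a * star q * a) * star p := by noncomm_ring
      _ = star q * a * star p := by rw [haq]
  · rw [hab, hpsym]
    simp [star_mul]
    rw [hpsym]
  · rw [hba, hqsym]
    simp [star_mul]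
    rw [hqsym]
end

section
/- In a *-ring, if B is a Moore-Penrose inverse of A and A is normal (A A* = A* A) with AB = BA, then B is normal: B B* = B* B. -/
theorem stmt10 {R : Type*} [Ring R] [StarRing R] (a b : R)
    (hb : (a) * (b) * (a) = (a) ∧ (b) * (a) * (b) = (b) ∧ star ((a) * (b)) = (a) * (b) ∧ star ((b) * (a)) = (b) * (a)) (hnormal : a * star a = star a * a)
    (hcomm : a * b = b * a) : b * star b = star b * b := by
  obtain ⟨h1, h2, h3, h4⟩ := hb
  have hsb : star b * (b * a) = star b := by
    calc star b * (b * a) = star b * star (b * a) := by rw [h4]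
      _ = star ((b * a) * b) := by rw [← star_mul]
      _ = star b := by rw [show (b * a) * b = b from h2]
  have hsa : star a * (a * b) = star a := by
    calc star a * (a * b) = star a * star (a * b) := by rw [h3]
      _ = star ((a * b) * a) := by rw [← star_mul]
      _ = star a := by rw [show (a * b) * a = a from h1]
  have key1 : star b * b * (a * star a) = a * b := by
    calc star b * b * (a * star a)
        = (star b * (b * a)) * star a := by rw [mul_assoc, mul_assoc, ← mul_assoc b a]
      _ = star b * star a := by rw [hsb]
      _ = star (a * b) := by rw [← star_mul]
      _ = a * b := h3
  have key2 : (a * star a) * (b * star b) = a * b := by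
    calc (a * star a) * (b * star b)
        = (star a * (a * b)) * star b := by
          rw [hnormal, mul_assoc, mul_assoc, ← mul_assoc a b]
      _ = star a * star b := by rw [hsa]
      _ = star (b * a) := by rw [← star_mul]
      _ = b * a := h4
      _ = a * b := hcomm.symm
  have hbe : b * (a * b) = b := by rw [← mul_assoc]; exact h2
  have heb : (a * b) * b = b := by rw [show a * b = b * a from hcomm]; exact h2
  calc b * star b = (a * b) * (b * star b) := by rw [← mul_assoc, heb]
    _ = (star b * b * (a * star a)) * (b * star b) := by rw [key1]
    _ = star b * b * ((a * star a) * (b * star b)) := by rw [mul_assoc]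
    _ = star b * b * (a * b) := by rw [key2]
    _ = star b * (b * (a * b)) := by rw [mul_assoc]
    _ = star b * b := by rw [hbe]
end

section
/- In a *-ring with unity, suppose A = B C is a full rank decomposition: U B = 1 for some U (B has a left inverse) and C V = 1 for some V (C has a right inverse). If Y is a Moore-Penrose inverse of B and Z is a Moore-Penrose inverse of C, then Z Y is a Moore-Penrose inverse of A = BC. -/
theorem stmt13 {R : Type*} [Ring R] [StarRing R] (a b c u v y z : R)
    (ha : a = b * c) (hu : u * b = 1) (hv : c * v = 1)
    (hy : (b) * (y) * (b) = (b) ∧ (y) * (b) * (y) = (y) ∧ star ((b) * (y)) = (b) * (y) ∧ star ((y) * (b)) = (y) * (b)) (hz : (c) * (z) * (c) = (c) ∧ (z) * (c) * (z) = (z) ∧ star ((c) * (z)) = (c) * (z) ∧ star ((z) * (c)) = (z) * (c)) :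
    (a) * (z * y) * (a) = (a) ∧ (z * y) * (a) * (z * y) = (z * y) ∧ star ((a) * (z * y)) = (a) * (z * y) ∧ star ((z * y) * (a)) = (z * y) * (a) := by
  obtain ⟨hy1, hy2, hy3, hy4⟩ := hy
  obtain ⟨hz1, hz2, hz3, hz4⟩ := hz
  have hyb : y * b = 1 := by
    have : u * (b * y * b) = u * b := by rw [hy1]
    calc y * b = 1 * (y * b) := by noncomm_ring
    _ = (u * b) * (y * b) := by rw [hu]
    _ = u * (b * y * b) := by noncomm_ring
    _ = u * b := this
    _ = 1 := hu
  have hcz : c * z = 1 := by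
    have : (c * z * c) * v = c * v := by rw [hz1]
    calc c * z = (c * z) * 1 := by noncomm_ring
    _ = (c * z) * (c * v) := by rw [hv]
    _ = (c * z * c) * v := by noncomm_ring
    _ = c * v := this
    _ = 1 := hv
  subst ha
  refine ⟨?_, ?_, ?_, ?_⟩
  · calc b * c * (z * y) * (b * c) = b * (c * z) * (y * b) * c := by noncomm_ring
    _ = b * c := by rw [hcz, hyb]; noncomm_ring
  · calc z * y * (b * c) * (z * y) = z * (y * b) * (c * z) * y := by noncomm_ring
    _ = z * y := by rw [hcz, hyb]; noncomm_ring
  · calc star (b * c * (z * y)) = star (b * (c * z) * y) := by noncomm_ring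
    _ = star (b * y) := by rw [hcz]; noncomm_ring
    _ = b * y := hy3
    _ = b * (c * z) * y := by rw [hcz]; noncomm_ring
    _ = b * c * (z * y) := by noncomm_ring
  · calc star (z * y * (b * c)) = star (z * (y * b) * c) := by noncomm_ring
    _ = star (z * c) := by rw [hyb]; noncomm_ring
    _ = z * c := hz4
    _ = z * (y * b) * c := by rw [hyb]; noncomm_ring
    _ = z * y * (b * c) := by noncomm_ring
end

section
/- In a *-ring, let X be a Moore-Penrose inverse of AB, Y a Moore-Penrose inverse of A, and Z a Moore-Penrose inverse of B. If A* A B B* = B B* A* A, then the reverse order law holds: Z Y is a Moore-Penrose inverse of AB. -/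
/-- Abstract commutation lemma: if `e = s*u = u*s`, `s*e = e*s = s`, and `c`
commutes with `s`, then `c` commutes with `e`. -/
lemma mp_comm_aux {R : Type*} [Ring R] (e s u c : R)
    (h1 : e = s * u) (h2 : e = u * s) (h3 : s * e = s) (h4 : e * s = s)
    (hc : c * s = s * c) : c * e = e * c := by
  have k1 : c * e = e * (c * e) := by
    calc c * e = c * (s * u) := by rw [← h1]
      _ = (c * s) * u := by rw [mul_assoc]
      _ = (s * c) * u := by rw [hc]
      _ = ((e * s) * c) * u := by rw [h4]
      _ = (e * (s * c)) * u := by rw [mul_assoc e s c]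
      _ = (e * (c * s)) * u := by rw [hc]
      _ = e * (c * (s * u)) := by rw [mul_assoc, mul_assoc]
      _ = e * (c * e) := by rw [← h1]
  have k2 : e * c = (e * c) * e := by
    calc e * c = (u * s) * c := by rw [← h2]
      _ = u * (s * c) := by rw [mul_assoc]
      _ = u * (c * s) := by rw [hc]
      _ = u * (c * (s * e)) := by rw [h3]
      _ = u * ((c * s) * e) := by rw [mul_assoc c s e]
      _ = u * ((s * c) * e) := by rw [hc]
      _ = (u * s) * (c * e) := by noncomm_ring
      _ = e * (c * e) := by rw [← h2]
      _ = (e * c) * e := by rw [mul_assoc]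
  rw [k1, ← mul_assoc, ← k2]

/-- If `y` is a Moore-Penrose inverse of `a` and `c` commutes with `star a * a`,
then `c` commutes with the projection `y * a`. -/
lemma mp_comm {R : Type*} [Ring R] [StarRing R] (a y c : R)
    (h1 : a * y * a = a) (h2 : y * a * y = y)
    (h3 : star (a * y) = a * y) (h4 : star (y * a) = y * a)
    (hc : c * (star a * a) = (star a * a) * c) :
    c * (y * a) = (y * a) * c := by
  have h3' : a * y = star y * star a := by rw [← h3, star_mul]
  have hsa : star a * (a * y) = star a := by
    calc star a * (a * y) = star a * star (a * y) := by rw [h3]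
      _ = star ((a * y) * a) := by rw [star_mul (a*y) a]
      _ = star a := by rw [h1]
  have k2 : y * a = (y * star y) * (star a * a) := by
    calc y * a = (y * a * y) * a := by rw [h2]
      _ = (y * (a * y)) * a := by rw [mul_assoc y a y]
      _ = (y * (star y * star a)) * a := by rw [← h3']
      _ = (y * star y) * (star a * a) := by noncomm_ring
  have k1 : y * a = (star a * a) * (y * star y) := by
    calc y * a = star (y * a) := h4.symm
      _ = star ((y * star y) * (star a * a)) := by rw [← k2]
      _ = (star a * a) * (y * star y) := by
          simp only [star_mul, star_star]
          all_goals noncomm_ring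
  have k3 : (star a * a) * (y * a) = star a * a := by
    calc (star a * a) * (y * a) = (star a * (a * y)) * a := by noncomm_ring
      _ = star a * a := by rw [hsa]
  have k4 : (y * a) * (star a * a) = star a * a := by
    calc (y * a) * (star a * a) = star ((star a * a) * star ((y * a))) := by
          simp only [star_mul, star_star]
          all_goals noncomm_ring
      _ = star ((star a * a) * (y * a)) := by rw [h4]
      _ = star (star a * a) := by rw [k3]
      _ = star a * a := by rw [star_mul, star_star]
  exact mp_comm_aux (y * a) (star a * a) (y * star y) c k1 k2 k3 k4 hc

theorem stmt17 {R : Type*} [Ring R] [StarRing R] (a b x y z : R)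
    (hx : (a * b) * (x) * (a * b) = (a * b) ∧ (x) * (a * b) * (x) = (x) ∧ star ((a * b) * (x)) = (a * b) * (x) ∧ star ((x) * (a * b)) = (x) * (a * b)) (hy : (a) * (y) * (a) = (a) ∧ (y) * (a) * (y) = (y) ∧ star ((a) * (y)) = (a) * (y) ∧ star ((y) * (a)) = (y) * (a)) (hz : (b) * (z) * (b) = (b) ∧ (z) * (b) * (z) = (z) ∧ star ((b) * (z)) = (b) * (z) ∧ star ((z) * (b)) = (z) * (b))
    (hcomm : star a * a * (b * star b) = b * star b * (star a * a)) :
    (a * b) * (z * y) * (a * b) = (a * b) ∧ (z * y) * (a * b) * (z * y) = (z * y) ∧ star ((a * b) * (z * y)) = (a * b) * (z * y) ∧ star ((z * y) * (a * b)) = (z * y) * (a * b) := by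
  obtain ⟨hy1, hy2, hy3, hy4⟩ := hy
  obtain ⟨hz1, hz2, hz3, hz4⟩ := hz
  -- rearranged star facts
  have hy3' : a * y = star y * star a := by rw [← hy3, star_mul]
  have hy4' : y * a = star a * star y := by rw [← hy4, star_mul]
  have hz3' : b * z = star z * star b := by rw [← hz3, star_mul]
  have hz4' : z * b = star b * star z := by rw [← hz4, star_mul]
  -- b * star b commutes with e := y * a
  have hte : (b * star b) * (y * a) = (y * a) * (b * star b) :=
    mp_comm a y (b * star b) hy1 hy2 hy3 hy4 hcomm.symm
  -- star a * a commutes with f := b * z  (apply mp_comm to the MP pair (star b, star z))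
  have hsf : (star a * a) * (b * z) = (b * z) * (star a * a) := by
    have m1 : star b * star z * star b = star b := by
      rw [← star_mul, ← star_mul, ← mul_assoc, hz1]
    have m2 : star z * star b * star z = star z := by
      rw [← star_mul, ← star_mul, ← mul_assoc, hz2]
    have m3 : star (star b * star z) = star b * star z := by
      rw [← star_mul, star_star, hz4]
    have m4 : star (star z * star b) = star z * star b := by
      rw [← star_mul, star_star, hz3]
    have hc : (star a * a) * (star (star b) * star b) = (star (star b) * star b) * (star a * a) := by
      rw [star_star]; exact hcomm
    have := mp_comm (star b) (star z) (star a * a) m1 m2 m3 m4 hc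
    rw [← hz3']  at this
    exact this
  -- f commutes with e
  have hfe : (b * z) * (y * a) = (y * a) * (b * z) :=
    mp_comm a y (b * z) hy1 hy2 hy3 hy4 hsf.symm
  -- small absorption facts
  have hae : a * (y * a) = a := by rw [← mul_assoc, hy1]
  have hey : (y * a) * y = y := hy2
  have hzf : z * (b * z) = z := by rw [← mul_assoc, hz2]
  have hfb : (b * z) * b = b := hz1
  refine ⟨?_, ?_, ?_, ?_⟩
  · -- (a*b)*(z*y)*(a*b) = a*b
    calc (a * b) * (z * y) * (a * b) = a * ((b * z) * ((y * a) * b)) := by noncomm_ring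
      _ = a * (((b * z) * (y * a)) * b) := by rw [mul_assoc (b*z) (y*a) b]
      _ = a * (((y * a) * (b * z)) * b) := by rw [hfe]
      _ = (a * (y * a)) * ((b * z) * b) := by noncomm_ring
      _ = a * b := by rw [hae, hfb]
  · -- (z*y)*(a*b)*(z*y) = z*y
    calc (z * y) * (a * b) * (z * y) = z * ((y * a) * ((b * z) * y)) := by noncomm_ring
      _ = z * (((y * a) * (b * z)) * y) := by rw [mul_assoc (y*a) (b*z) y]
      _ = z * (((b * z) * (y * a)) * y) := by rw [← hfe]
      _ = (z * (b * z)) * ((y * a) * y) := by noncomm_ring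
      _ = z * y := by rw [hzf, hey]
  · -- star ((a*b)*(z*y)) = (a*b)*(z*y)
    -- key: X = star y * ((b*z) * ((y*a) * star a))
    have ha2 : a = star y * (star a * a) := by
      calc a = (a * y) * a := hy1.symm
        _ = (star y * star a) * a := by rw [← hy3']
        _ = star y * (star a * a) := by rw [mul_assoc]
    have hsy : (star a * a) * y = (y * a) * star a := by
      calc (star a * a) * y = star a * (a * y) := by rw [mul_assoc]
        _ = star a * (star y * star a) := by rw [hy3']
        _ = (star a * star y) * star a := by rw [mul_assoc]
        _ = (y * a) * star a := by rw [← hy4']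
    have key : (a * b) * (z * y) = star y * ((b * z) * ((y * a) * star a)) := by
      calc (a * b) * (z * y) = a * ((b * z) * y) := by noncomm_ring
        _ = (star y * (star a * a)) * ((b * z) * y) := by rw [← ha2]
        _ = star y * (((star a * a) * (b * z)) * y) := by noncomm_ring
        _ = star y * (((b * z) * (star a * a)) * y) := by rw [hsf]
        _ = star y * ((b * z) * ((star a * a) * y)) := by
              rw [mul_assoc (b*z) (star a * a) y]
        _ = star y * ((b * z) * ((y * a) * star a)) := by rw [hsy]
    calc star ((a * b) * (z * y))
        = star (star y * ((b * z) * ((y * a) * star a))) := by rw [key]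
      _ = ((a * (y * a)) * (b * z)) * y := by
            simp only [star_mul, star_star, hy4, hz3]
            all_goals noncomm_ring
      _ = (a * (b * z)) * y := by rw [hae]
      _ = (a * b) * (z * y) := by noncomm_ring
  · -- star ((z*y)*(a*b)) = (z*y)*(a*b)
    have hb2 : b = (b * star b) * star z := by
      calc b = (b * z) * b := hz1.symm
        _ = b * (z * b) := by rw [mul_assoc]
        _ = b * (star b * star z) := by rw [hz4']
        _ = (b * star b) * star z := by rw [mul_assoc]
    have key : (z * y) * (a * b) = z * (((b * star b) * (y * a)) * star z) := by
      calc (z * y) * (a * b) = z * ((y * a) * b) := by noncomm_ring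
        _ = z * ((y * a) * ((b * star b) * star z)) := by rw [← hb2]
        _ = z * (((y * a) * (b * star b)) * star z) := by
              rw [mul_assoc (y*a) (b * star b) (star z)]
        _ = z * (((b * star b) * (y * a)) * star z) := by rw [← hte]
    calc star ((z * y) * (a * b))
        = star (z * (((b * star b) * (y * a)) * star z)) := by rw [key]
      _ = z * (((y * a) * (b * star b)) * star z) := by
            simp only [star_mul, star_star, hy4]
            all_goals noncomm_ring
      _ = z * (((b * star b) * (y * a)) * star z) := by rw [hte]
      _ = (z * y) * (a * b) := by rw [← key]
end
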